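/- arXiv:1707.09042 — 3 statements merged into one kernel-verified Lean document; each statement's English description precedes it below -/
import Mathlib

section
/- Fix N and α ∈ (0,1/2) with αN an integer. For integers 0 ≤ m ≤ m' ≤ N(N−1)/2, let μ_m denote the uniform probability measure on the set of simple graphs on N labeled vertices having exactly m edges. Then | E_{μ_m}[MCUT_α] − E_{μ_{m'}}[MCUT_α] | ≤ m' − m. -/
/-!
Adding a uniformly random non-edge to a uniform `m`-edge graph yields a uniform `(m+1)`-edge
graph: in the inclusion relation between the `m`-element and the `(m+1)`-element subsets of the
`N.choose 2` possible edges, every `m`-set lies below `N.choose 2 - m` sets and every `(m+1)`-set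
lies above `m + 1` sets, so averages over the two layers can be compared pair by pair. Since
`MCUT_α` is monotone and grows by at most one when an edge is added, this gives
`E_m ≤ E_{m+1} ≤ E_m + 1`, and the theorem follows by iterating.
-/

open Finset MeasureTheory

noncomputable section

/-- Number of edges of a simple graph on `Fin N`. -/
def numEdges {N : ℕ} (G : SimpleGraph (Fin N)) : ℕ := Nat.card G.edgeSet

/-- Number of edges of `G` with exactly one endpoint in `s` (counted as ordered pairs
with the first coordinate in `s`, so each crossing edge is counted once). -/
def cutCount {N : ℕ} (G : SimpleGraph (Fin N)) (s : Finset (Fin N)) : ℕ :=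
  Nat.card {p : Fin N × Fin N // p.1 ∈ s ∧ p.2 ∉ s ∧ G.Adj p.1 p.2}

/-- `MCUT_α(G)`: the maximum over vertex sets `V₁` of size `αN` of the number of
edges of `G` with exactly one endpoint in `V₁`. -/
def mcut {N : ℕ} (α : ℚ) (G : SimpleGraph (Fin N)) : ℕ :=
  (Finset.powersetCard ⌊α * (N : ℚ)⌋₊ (Finset.univ : Finset (Fin N))).sup fun s => cutCount G s

/-- `α N` is a (nonnegative) integer. -/
def alphaIntegral (α : ℚ) (N : ℕ) : Prop := ∃ k : ℕ, α * (N : ℚ) = (k : ℚ)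

/-- Expectation of `f` under the Erdős–Rényi measure `G(N,p)`: each potential edge is
present independently with probability `p`, so a graph with `e` edges has probability
`p^e (1-p)^(C(N,2) - e)`. -/
def erExp (N : ℕ) (p : ℝ) (f : SimpleGraph (Fin N) → ℝ) : ℝ :=
  ∑ G : SimpleGraph (Fin N),
    p ^ numEdges G * (1 - p) ^ (N.choose 2 - numEdges G) * f G

/-- Probability of an event under the Erdős–Rényi measure `G(N,p)`. -/
def erProb (N : ℕ) (p : ℝ) (E : Set (SimpleGraph (Fin N))) : ℝ :=
  erExp N p (Set.indicator E fun _ => 1)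

/-- `G` is `d`-regular. -/
def IsDReg {N : ℕ} (d : ℕ) (G : SimpleGraph (Fin N)) : Prop :=
  ∀ v, Nat.card (G.neighborSet v) = d

open Classical in
/-- The finite set of simple `d`-regular graphs on `N` labeled vertices. -/
def regFinset (N d : ℕ) : Finset (SimpleGraph (Fin N)) :=
  Finset.univ.filter fun G => IsDReg d G

/-- Expectation of `f` under the uniform measure `R(N,d)` on simple `d`-regular graphs. -/
def regExp (N d : ℕ) (f : SimpleGraph (Fin N) → ℝ) : ℝ :=
  (∑ G ∈ regFinset N d, f G) / ((regFinset N d).card : ℝ)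

/-- Probability of an event under the uniform measure `R(N,d)`. -/
def regProb (N d : ℕ) (E : Set (SimpleGraph (Fin N))) : ℝ :=
  regExp N d (Set.indicator E fun _ => 1)

end

open Classical in
/-- The finite set of simple graphs on `N` labeled vertices with exactly `m` edges. -/
noncomputable def edgeCountFinset (N m : ℕ) : Finset (SimpleGraph (Fin N)) :=
  Finset.univ.filter fun G => numEdges G = m

/-- Expectation of `f` under the uniform measure `μ_m` on simple graphs on `N` labeled
vertices having exactly `m` edges. -/
noncomputable def unifEdgeExp (N m : ℕ) (f : SimpleGraph (Fin N) → ℝ) : ℝ :=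
  (∑ G ∈ edgeCountFinset N m, f G) / ((edgeCountFinset N m).card : ℝ)

namespace Finset

variable {α ι κ : Type*}

theorem sum_div_card_le_sum_div_card_of_biregular (s : Finset ι) (t : Finset κ)
    (r : ι → κ → Prop) [∀ a b, Decidable (r a b)] {k l : ℕ} (hs : s.Nonempty) (hk : 0 < k)
    (habove : ∀ a ∈ s, #(t.bipartiteAbove r a) = k)
    (hbelow : ∀ b ∈ t, #(s.bipartiteBelow r b) = l)
    (f : ι → ℝ) (g : κ → ℝ) (hfg : ∀ a ∈ s, ∀ b ∈ t, r a b → f a ≤ g b) :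
    (∑ a ∈ s, f a) / #s ≤ (∑ b ∈ t, g b) / #t := by
  have hcard : #s * k = #t * l := card_mul_eq_card_mul r habove hbelow
  have hpos : (0 : ℝ) < #s * k := by
    have := hs.card_pos
    positivity
  have hsum : (∑ a ∈ s, f a) * k ≤ (∑ b ∈ t, g b) * l := calc
    (∑ a ∈ s, f a) * k = ∑ a ∈ s, ∑ _b ∈ t.bipartiteAbove r a, f a := by
      rw [sum_mul]
      exact sum_congr rfl fun a ha => by simp [habove a ha, mul_comm]
    _ ≤ ∑ a ∈ s, ∑ b ∈ t.bipartiteAbove r a, g b := by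
      gcongr with a ha b hb
      rw [mem_bipartiteAbove] at hb
      exact hfg a ha b hb.1 hb.2
    _ = ∑ b ∈ t, ∑ _a ∈ s.bipartiteBelow r b, g b :=
      sum_sum_bipartiteAbove_eq_sum_sum_bipartiteBelow r fun _ b => g b
    _ = (∑ b ∈ t, g b) * l := by
      rw [sum_mul]
      exact sum_congr rfl fun b hb => by simp [hbelow b hb, mul_comm]
  have hcardℝ : (#s : ℝ) * k = #t * l := by exact_mod_cast hcard
  have hl : (0 : ℝ) < l := pos_of_mul_pos_right (hcardℝ ▸ hpos) (Nat.cast_nonneg _)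
  have ht : (0 : ℝ) < #t := pos_of_mul_pos_left (hcardℝ ▸ hpos) hl.le
  calc (∑ a ∈ s, f a) / #s = (∑ a ∈ s, f a) * k / (#s * k) := by
        field_simp
    _ ≤ (∑ b ∈ t, g b) * l / (#t * l) := by
        rw [← hcardℝ]; gcongr
    _ = (∑ b ∈ t, g b) / #t := by field_simp

theorem filter_powersetCard_subset_eq_powersetCard [DecidableEq α] {U T : Finset α}
    (hTU : T ⊆ U) (m : ℕ) : {S ∈ U.powersetCard m | S ⊆ T} = T.powersetCard m := by
  ext S
  simp only [mem_filter, mem_powersetCard]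
  exact ⟨fun ⟨⟨_, hS⟩, hST⟩ => ⟨hST, hS⟩, fun ⟨hST, hS⟩ => ⟨⟨hST.trans hTU, hS⟩, hST⟩⟩

noncomputable def layerAverage (U : Finset α) (F : Finset α → ℝ) (m : ℕ) : ℝ :=
  (∑ S ∈ U.powersetCard m, F S) / #(U.powersetCard m)

variable [DecidableEq α] {U : Finset α} {F : Finset α → ℝ} {m : ℕ}

theorem card_bipartiteAbove_powersetCard_succ {S : Finset α}
    (hS : S ∈ U.powersetCard m) :
    #((U.powersetCard (m + 1)).bipartiteAbove (· ⊆ ·) S) = #U - m := by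
  rw [mem_powersetCard] at hS
  rw [bipartiteAbove, card_filter_powersetCard_subset _ _ _ hS.1 (by omega), hS.2,
    Nat.add_sub_cancel_left, Nat.choose_one_right]

theorem card_bipartiteBelow_powersetCard {T : Finset α} (hT : T ∈ U.powersetCard (m + 1)) :
    #((U.powersetCard m).bipartiteBelow (· ⊆ ·) T) = m + 1 := by
  rw [mem_powersetCard] at hT
  rw [bipartiteBelow, filter_powersetCard_subset_eq_powersetCard hT.1, card_powersetCard, hT.2,
    Nat.choose_succ_self_right]

theorem layerAverage_le_layerAverage_succ (hF : Monotone F) (hm : m < #U) :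
    layerAverage U F m ≤ layerAverage U F (m + 1) :=
  sum_div_card_le_sum_div_card_of_biregular _ _ (· ⊆ ·) (powersetCard_nonempty.2 hm.le)
    (Nat.sub_pos_of_lt hm) (fun _ => card_bipartiteAbove_powersetCard_succ)
    (fun _ => card_bipartiteBelow_powersetCard) F F fun _ _ _ _ => @hF _ _

theorem layerAverage_succ_le_layerAverage_add_one (hF : ∀ S a, F (insert a S) ≤ F S + 1)
    (hm : m < #U) : layerAverage U F (m + 1) ≤ layerAverage U F m + 1 := by
  have hne : (U.powersetCard m).Nonempty := powersetCard_nonempty.2 hm.le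
  calc layerAverage U F (m + 1) ≤ (∑ S ∈ U.powersetCard m, (F S + 1)) / #(U.powersetCard m) :=
        sum_div_card_le_sum_div_card_of_biregular _ _ (fun T S => S ⊆ T)
          (powersetCard_nonempty.2 hm) m.succ_pos (fun _ => card_bipartiteBelow_powersetCard)
          (fun _ => card_bipartiteAbove_powersetCard_succ) F (F · + 1) fun T _ S hS hST => by
            obtain ⟨a, -, rfl⟩ := exists_eq_insert_iff.2
              ⟨hST, by rw [(mem_powersetCard.1 hS).2, (mem_powersetCard.1 ‹T ∈ _›).2]⟩
            exact hF S a
    _ = layerAverage U F m + 1 := by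
        rw [layerAverage, sum_add_distrib, add_div, sum_const, nsmul_one,
          div_self (Nat.cast_ne_zero.2 hne.card_pos.ne')]

theorem layerAverage_le_layerAverage_add {m m' : ℕ} (hF : Monotone F)
    (hF' : ∀ S a, F (insert a S) ≤ F S + 1) (hmm' : m ≤ m') (hm' : m' ≤ #U) :
    layerAverage U F m ≤ layerAverage U F m' ∧
      layerAverage U F m' ≤ layerAverage U F m + (m' - m : ℝ) := by
  induction m', hmm' using Nat.le_induction with
  | base => simp
  | succ n hmn ih =>
    obtain ⟨ih₁, ih₂⟩ := ih (by omega)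
    have h₁ := layerAverage_le_layerAverage_succ hF (U := U) (m := n) (by omega)
    have h₂ := layerAverage_succ_le_layerAverage_add_one hF' (U := U) (m := n) (by omega)
    push_cast
    constructor <;> linarith

end Finset

open SimpleGraph

section

variable {N : ℕ}

theorem cutCount_eq_ncard (G : SimpleGraph (Fin N)) (s : Finset (Fin N)) :
    cutCount G s = {p : Fin N × Fin N | p.1 ∈ s ∧ p.2 ∉ s ∧ G.Adj p.1 p.2}.ncard :=
  Nat.card_coe_set_eq _

theorem cutCount_mono {G H : SimpleGraph (Fin N)} (h : H ≤ G) (s : Finset (Fin N)) :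
    cutCount H s ≤ cutCount G s := by
  rw [cutCount_eq_ncard, cutCount_eq_ncard]
  exact Set.ncard_le_ncard fun p ⟨hp₁, hp₂, hp⟩ => ⟨hp₁, hp₂, h hp⟩

theorem cutCount_le_cutCount_deleteEdges_add_one (G : SimpleGraph (Fin N)) (e : Sym2 (Fin N))
    (s : Finset (Fin N)) : cutCount G s ≤ cutCount (G.deleteEdges {e}) s + 1 := by
  have hsub : {p : Fin N × Fin N | p.1 ∈ s ∧ p.2 ∉ s ∧ G.Adj p.1 p.2} ⊆
      {p | p.1 ∈ s ∧ p.2 ∉ s ∧ (G.deleteEdges {e}).Adj p.1 p.2} ∪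
        {p | p.1 ∈ s ∧ p.2 ∉ s ∧ s(p.1, p.2) = e} := by
    rintro p ⟨hp₁, hp₂, hp⟩
    by_cases hpe : s(p.1, p.2) = e
    · exact Or.inr ⟨hp₁, hp₂, hpe⟩
    · exact Or.inl ⟨hp₁, hp₂, deleteEdges_adj.2 ⟨hp, hpe⟩⟩
  -- the orientation of a crossing pair is fixed by `s`, so at most one pair lies over `e`
  have hone : {p : Fin N × Fin N | p.1 ∈ s ∧ p.2 ∉ s ∧ s(p.1, p.2) = e}.ncard ≤ 1 := by
    refine (Set.ncard_le_one (Set.toFinite _)).2 fun p ⟨hp₁, hp₂, hp⟩ q ⟨hq₁, hq₂, hq⟩ => ?_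
    rcases Sym2.eq_iff.1 (hp.trans hq.symm) with ⟨h₁, h₂⟩ | ⟨h₁, -⟩
    · exact Prod.ext h₁ h₂
    · exact absurd (h₁ ▸ hp₁) hq₂
  rw [cutCount_eq_ncard, cutCount_eq_ncard]
  exact (Set.ncard_le_ncard hsub).trans ((Set.ncard_union_le _ _).trans (by omega))

theorem mcut_mono (α : ℚ) {G H : SimpleGraph (Fin N)} (h : H ≤ G) : mcut α H ≤ mcut α G :=
  sup_mono_fun fun s _ => cutCount_mono h s

theorem mcut_le_mcut_deleteEdges_add_one (α : ℚ) (G : SimpleGraph (Fin N)) (e : Sym2 (Fin N)) :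
    mcut α G ≤ mcut α (G.deleteEdges {e}) + 1 :=
  Finset.sup_le fun s hs =>
    (cutCount_le_cutCount_deleteEdges_add_one G e s).trans (Nat.add_le_add_right (le_sup hs) 1)

theorem mcut_fromEdgeSet_insert_le (α : ℚ) (s : Set (Sym2 (Fin N))) (e : Sym2 (Fin N)) :
    mcut α (fromEdgeSet (insert e s)) ≤ mcut α (fromEdgeSet s) + 1 := by
  have hdel : (fromEdgeSet (insert e s)).deleteEdges {e} ≤ fromEdgeSet s := by
    rw [deleteEdges, ← fromEdgeSet_sdiff]
    exact fromEdgeSet_mono (Set.sdiff_singleton_subset_iff.2 subset_rfl)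
  exact (mcut_le_mcut_deleteEdges_add_one α _ e).trans (Nat.add_le_add_right (mcut_mono α hdel) 1)

theorem edgeSet_fromEdgeSet_of_subset {S : Finset (Sym2 (Fin N))}
    (hS : S ⊆ (⊤ : SimpleGraph (Fin N)).edgeFinset) :
    (fromEdgeSet (S : Set (Sym2 (Fin N)))).edgeSet = S := by
  rw [edgeSet_fromEdgeSet, sdiff_eq_left, Set.disjoint_left]
  exact fun e he => Sym2.mem_diagSet.not.2 (not_isDiag_of_mem_edgeSet _ (mem_edgeFinset.1 (hS he)))

theorem mem_edgeCountFinset {m : ℕ} {G : SimpleGraph (Fin N)} :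
    G ∈ edgeCountFinset N m ↔ G.edgeSet.ncard = m := by
  unfold edgeCountFinset
  rw [mem_filter]
  simp [numEdges]

theorem bijOn_fromEdgeSet_powersetCard (m : ℕ) :
    Set.BijOn (fun S : Finset (Sym2 (Fin N)) => fromEdgeSet (S : Set (Sym2 (Fin N))))
      ((⊤ : SimpleGraph (Fin N)).edgeFinset.powersetCard m) (edgeCountFinset N m) := by
  classical
  refine ⟨fun S hS => ?_, fun S hS T hT hST => ?_, fun G hG => ?_⟩
  · rw [mem_coe, mem_powersetCard] at hS
    rw [mem_coe, mem_edgeCountFinset, edgeSet_fromEdgeSet_of_subset hS.1, Set.ncard_coe_finset,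
      hS.2]
  · have := congrArg edgeSet hST
    rwa [edgeSet_fromEdgeSet_of_subset (mem_powersetCard.1 hS).1,
      edgeSet_fromEdgeSet_of_subset (mem_powersetCard.1 hT).1, coe_inj] at this
  · refine ⟨G.edgeFinset, ?_, by simp⟩
    rw [mem_coe, mem_edgeCountFinset] at hG
    rw [mem_coe, mem_powersetCard, ← hG, ← Set.ncard_coe_finset, coe_edgeFinset]
    exact ⟨edgeFinset_mono le_top, rfl⟩

theorem unifEdgeExp_eq_layerAverage (m : ℕ) (f : SimpleGraph (Fin N) → ℝ) :
    unifEdgeExp N m f =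
      (⊤ : SimpleGraph (Fin N)).edgeFinset.layerAverage (fun S => f (fromEdgeSet S)) m := by
  have h := bijOn_fromEdgeSet_powersetCard (N := N) m
  rw [unifEdgeExp, layerAverage, sum_nbij _ h.mapsTo h.injOn h.surjOn fun _ _ => rfl,
    card_nbij _ h.mapsTo h.injOn h.surjOn]

end

theorem statement3_general (N : ℕ) (α : ℚ) (m m' : ℕ) (hmm' : m ≤ m') (hm' : m' ≤ N * (N - 1) / 2) :
    |unifEdgeExp N m (fun G => (mcut α G : ℝ)) -
      unifEdgeExp N m' (fun G => (mcut α G : ℝ))| ≤ (m' : ℝ) - m := by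
  have hm'U : m' ≤ #(⊤ : SimpleGraph (Fin N)).edgeFinset := by
    rwa [card_edgeFinset_top_eq_card_choose_two, Fintype.card_fin, Nat.choose_two_right]
  have hmono : Monotone fun S : Finset (Sym2 (Fin N)) =>
      (mcut α (fromEdgeSet (S : Set (Sym2 (Fin N)))) : ℝ) := by
    intro S T hST
    have hle : fromEdgeSet (S : Set (Sym2 (Fin N))) ≤ fromEdgeSet T :=
      fromEdgeSet_mono (coe_subset.2 hST)
    exact Nat.cast_le.2 (mcut_mono α hle)
  have hinsert (S : Finset (Sym2 (Fin N))) (e : Sym2 (Fin N)) :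
      (mcut α (fromEdgeSet (↑(insert e S) : Set (Sym2 (Fin N)))) : ℝ) ≤
        mcut α (fromEdgeSet (S : Set (Sym2 (Fin N)))) + 1 := by
    rw [coe_insert]
    exact (Nat.cast_le.2 (mcut_fromEdgeSet_insert_le α _ e)).trans_eq (Nat.cast_succ _)
  obtain ⟨h₁, h₂⟩ := layerAverage_le_layerAverage_add hmono hinsert hmm' hm'U
  rw [unifEdgeExp_eq_layerAverage, unifEdgeExp_eq_layerAverage, abs_le]
  constructor <;> linarith

/-- Fix `N` and `α ∈ (0,1/2)` with `αN` an integer. For integers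
`0 ≤ m ≤ m' ≤ N(N−1)/2`, `|E_{μ_m}[MCUT_α] − E_{μ_{m'}}[MCUT_α]| ≤ m' − m`. -/
theorem statement3 (N : ℕ) (α : ℚ) (hα0 : 0 < α) (hα : α < 1 / 2)
    (hint : alphaIntegral α N) (m m' : ℕ) (hmm' : m ≤ m') (hm' : m' ≤ N * (N - 1) / 2) :
    |unifEdgeExp N m (fun G => (mcut α G : ℝ)) -
      unifEdgeExp N m' (fun G => (mcut α G : ℝ))| ≤ (m' : ℝ) - m :=
  statement3_general N α m m' hmm' hm'
end

section
/- Let T > 0. Suppose (ν_β) is a family of finite Borel measures on [0,T] of the form dν_β(t) = m_β(t) dt + c_β δ_T and ν is a finite Borel measure of the form dν(t) = m(t) dt + c δ_T, where m_β, m : [0,T) → [0,∞) are nondecreasing and right-continuous with m_β dt, m dt finite measures, and c_β, c ≥ 0. Assume ν_β → ν in the weak-* topology as β → ∞, i.e. ∫ f dν_β → ∫ f dν for every continuous f : [0,T] → ℝ. Then for every bounded Borel measurable ψ : [0,T] → ℝ satisfying lim_{s↑T} ψ(s) = ψ(T), one has ∫_{[0,T]} ψ dν_β → ∫_{[0,T]}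 ψ dν as β → ∞. -/
/-!
A nondecreasing density `w` on `[0, T)` satisfies `w t * (T - t) ≤ ∫ₜᵀ w`, so on `(-∞, s]`
each of the measures is dominated by `M / (T - s)` times Lebesgue measure, where `M` bounds all
the masses (these converge: test against `1`). So `ψ` can be replaced, uniformly in `β`, by a
continuous `h` which equals `ψ T` near `T`, where `ψ` is uniformly close to `ψ T` and the atoms
at `T` see no difference, and which is `L¹`-close to `ψ` away from `T`, where the domination
turns the `L¹` error into a small error against every measure. Weak-* convergence applies to
`h`.
-/

open MeasureTheory Filter Set Topology

theorem tendsto_of_forall_approx {ι : Type*} {l : Filter ι} {u : ι → ℝ} {a : ℝ}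
    (h : ∀ ε > 0, ∃ v : ι → ℝ, ∃ b, Tendsto v l (𝓝 b) ∧ (∀ᶠ i in l, |u i - v i| ≤ ε) ∧
      |a - b| ≤ ε) :
    Tendsto u l (𝓝 a) := by
  refine Metric.tendsto_nhds.2 fun ε hε => ?_
  obtain ⟨v, b, hv, huv, hab⟩ := h (ε / 4) (by positivity)
  filter_upwards [huv, Metric.tendsto_nhds.1 hv (ε / 4) (by positivity)] with i hi hvi
  rw [Real.dist_eq] at hvi ⊢
  rw [abs_le] at hi hab
  rw [abs_lt] at hvi ⊢
  constructor <;> linarith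

theorem integral_le_mul_integral_of_restrict_le_smul {α : Type*} [MeasurableSpace α]
    {μ ν : Measure α} {s : Set α} {F : α → ℝ} {K : ℝ} (hK : 0 ≤ K)
    (hle : μ.restrict s ≤ ENNReal.ofReal K • ν) (hF0 : 0 ≤ F) (hF : Integrable F ν)
    (hFs : ∀ x ∉ s, F x = 0) :
    ∫ x, F x ∂μ ≤ K * ∫ x, F x ∂ν := by
  calc ∫ x, F x ∂μ = ∫ x in s, F x ∂μ :=
        (setIntegral_eq_integral_of_forall_compl_eq_zero hFs).symm
    _ ≤ ∫ x, F x ∂(ENNReal.ofReal K • ν) :=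
        integral_mono_measure hle (ae_of_all _ hF0) (hF.smul_measure ENNReal.ofReal_ne_top)
    _ = K * ∫ x, F x ∂ν := by
        rw [integral_smul_measure, ENNReal.toReal_ofReal hK, smul_eq_mul]

theorem abs_setIntegral_sub_le_of_restrict_le_smul {α : Type*} [MeasurableSpace α]
    {μ ν : Measure α} {S A : Set α} {φ χ F : α → ℝ} {K M ε : ℝ} (hS : MeasurableSet S)
    (hM : 0 ≤ M) (hμS : μ S ≤ ENNReal.ofReal M) (hK : 0 ≤ K)
    (hdom : μ.restrict A ≤ ENNReal.ofReal K • ν) (hφ : IntegrableOn φ S μ)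
    (hχ : IntegrableOn χ S μ) (hF : Integrable F ν) (hF0 : 0 ≤ F) (hFA : ∀ x ∉ A, F x = 0)
    (hε : 0 ≤ ε) (hφχ : ∀ x ∈ S, |φ x - χ x| ≤ F x + ε) :
    |∫ x in S, φ x ∂μ - ∫ x in S, χ x ∂μ| ≤ K * ∫ x, F x ∂ν + M * ε := by
  have hμS' : μ S ≠ ⊤ := ne_top_of_le_ne_top ENNReal.ofReal_ne_top hμS
  have hdomS : (μ.restrict S).restrict A ≤ ENNReal.ofReal K • ν :=
    (Measure.restrict_mono subset_rfl Measure.restrict_le_self).trans hdom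
  have hFμ : IntegrableOn F S μ :=
    (integrableOn_iff_integrable_of_support_subset fun x hx =>
      by_contra fun h => hx (hFA x h)).1
        ((hF.smul_measure ENNReal.ofReal_ne_top).mono_measure hdomS)
  calc |∫ x in S, φ x ∂μ - ∫ x in S, χ x ∂μ|
      = |∫ x in S, φ x - χ x ∂μ| := by rw [integral_sub hφ hχ]
    _ ≤ ∫ x in S, |φ x - χ x| ∂μ := abs_integral_le_integral_abs
    _ ≤ ∫ x in S, (F x + ε) ∂μ := by
        refine integral_mono_of_nonneg (ae_of_all _ fun _ => abs_nonneg _)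
          (hFμ.add (integrableOn_const hμS')) ?_
        filter_upwards [ae_restrict_mem hS] with x hx using hφχ x hx
    _ = ∫ x in S, F x ∂μ + μ.real S * ε := by
        rw [integral_add hFμ (integrableOn_const hμS'), setIntegral_const, smul_eq_mul]
    _ ≤ K * ∫ x, F x ∂ν + M * ε := by
        gcongr
        · exact integral_le_mul_integral_of_restrict_le_smul hK hdomS hF0 hF hFA
        · exact ENNReal.toReal_le_of_le_ofReal hM hμS

theorem ofReal_mul_le_setLIntegral_of_monotoneOn {w : ℝ → ℝ} {a b t : ℝ}
    (hw : MonotoneOn w (Ico a b)) (ht : t ∈ Ico a b) :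
    ENNReal.ofReal (w t) * ENNReal.ofReal (b - t) ≤ ∫⁻ s in Ico t b, ENNReal.ofReal (w s) := by
  rw [← Real.volume_Ico, ← setLIntegral_const]
  exact setLIntegral_mono' measurableSet_Ico fun s hs =>
    ENNReal.ofReal_le_ofReal (hw ht ⟨ht.1.trans hs.1, hs.2⟩ hs.1)

theorem restrict_Iic_le_smul_volume_of_monotoneOn {w : ℝ → ℝ} {a b c M s : ℝ}
    {μ : Measure ℝ}
    (hμ : μ = (volume.restrict (Ico a b)).withDensity (fun t => ENNReal.ofReal (w t)) +
      ENNReal.ofReal c • Measure.dirac b)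
    (hw : MonotoneOn w (Ico a b)) (hM : μ (Icc a b) ≤ ENNReal.ofReal M) (hs : s < b) :
    μ.restrict (Iic s) ≤ ENNReal.ofReal (M / (b - s)) • volume := by
  have hdens : ∀ t ∈ Iic s ∩ Ico a b,
      ENNReal.ofReal (w t) ≤ ENNReal.ofReal (M / (b - s)) := by
    rintro t ⟨hts, ht⟩
    rw [ENNReal.ofReal_div_of_pos (sub_pos.2 hs),
      ENNReal.le_div_iff_mul_le (by simp [hs]) (by simp)]
    calc ENNReal.ofReal (w t) * ENNReal.ofReal (b - s)
        ≤ ENNReal.ofReal (w t) * ENNReal.ofReal (b - t) := by gcongr; exact hts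
      _ ≤ ∫⁻ s in Ico t b, ENNReal.ofReal (w s) :=
        ofReal_mul_le_setLIntegral_of_monotoneOn hw ht
      _ ≤ μ (Ico t b) := by
        rw [hμ, Measure.add_apply, withDensity_apply _ measurableSet_Ico,
          Measure.restrict_restrict measurableSet_Ico,
          inter_eq_left.2 (Ico_subset_Ico_left ht.1)]
        exact le_self_add
      _ ≤ μ (Icc a b) := measure_mono fun x hx => ⟨ht.1.trans hx.1, hx.2.le⟩
      _ ≤ ENNReal.ofReal M := hM
  have hdirac : (Measure.dirac b).restrict (Iic s) = 0 := by
    simp [Measure.restrict_eq_zero, hs]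
  calc μ.restrict (Iic s)
      = ((volume.restrict (Ico a b)).restrict (Iic s)).withDensity
          (fun t => ENNReal.ofReal (w t)) := by
        rw [hμ, Measure.restrict_add, restrict_withDensity measurableSet_Iic,
          Measure.restrict_smul, hdirac, smul_zero, add_zero]
    _ ≤ ((volume.restrict (Ico a b)).restrict (Iic s)).withDensity
          (fun _ => ENNReal.ofReal (M / (b - s))) := by
        refine withDensity_mono ?_
        rw [Measure.restrict_restrict measurableSet_Iic]
        filter_upwards [ae_restrict_mem (measurableSet_Iic.inter measurableSet_Ico)] with t ht
        exact hdens t ht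
    _ ≤ ENNReal.ofReal (M / (b - s)) • volume := by
        rw [withDensity_const]
        gcongr
        exact Measure.restrict_le_self.trans Measure.restrict_le_self

theorem exists_lt_forall_Ioc_abs_sub_le {ψ : ℝ → ℝ} {T ε : ℝ}
    (hψT : Tendsto ψ (𝓝[<] T) (𝓝 (ψ T))) (hε : 0 < ε) :
    ∃ l < T, ∀ t ∈ Ioc l T, |ψ t - ψ T| ≤ ε := by
  obtain ⟨l, hlT, hl⟩ := mem_nhdsLT_iff_exists_Ioo_subset.1
    (hψT (Metric.closedBall_mem_nhds (ψ T) hε))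
  refine ⟨l, hlT, fun t ⟨hlt, htT⟩ => ?_⟩
  rcases htT.lt_or_eq with htT | rfl
  · exact hl ⟨hlt, htT⟩
  · simpa using hε.le

theorem MeasureTheory.Integrable.exists_continuous_eq_zero_integral_norm_sub_le {E : Type*}
    [NormedAddCommGroup E] [NormedSpace ℝ E] {f : ℝ → E} (hf : Integrable f) {u v ε : ℝ}
    (hfu : ∀ t, u < t → f t = 0) (huv : u < v) (hε : 0 < ε) :
    ∃ g : ℝ → E, Continuous g ∧ HasCompactSupport g ∧ (∀ t, v ≤ t → g t = 0) ∧
      ∫ t, ‖f t - g t‖ ≤ ε := by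
  obtain ⟨g, hgc, hfg, hg, hgi⟩ := hf.exists_hasCompactSupport_integral_sub_le hε
  set χ : ℝ → ℝ := fun t => Real.smoothTransition ((v - t) / (v - u))
  have hχ : Continuous χ := Real.smoothTransition.continuous.comp (by fun_prop)
  have hχu : ∀ t ≤ u, χ t = 1 := fun t ht =>
    Real.smoothTransition.one_of_one_le ((one_le_div (sub_pos.2 huv)).2 (by linarith))
  have hχv : ∀ t, v ≤ t → χ t = 0 := fun t ht =>
    Real.smoothTransition.zero_of_nonpos
      (div_nonpos_of_nonpos_of_nonneg (by linarith) (by linarith))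
  refine ⟨fun t => χ t • g t, hχ.smul hg, hgc.smul_left, fun t ht => by simp [hχv t ht], ?_⟩
  -- the cutoff only acts where `f` vanishes, so it can only bring `g` closer to `f`
  have hpt : ∀ t, ‖f t - χ t • g t‖ ≤ ‖f t - g t‖ := by
    intro t
    rcases le_or_gt t u with htu | htu
    · simp [hχu t htu]
    · rw [hfu t htu, zero_sub, zero_sub, norm_neg, norm_neg, norm_smul, Real.norm_eq_abs,
        abs_of_nonneg (Real.smoothTransition.nonneg _)]
      exact mul_le_of_le_one_left (norm_nonneg _) (Real.smoothTransition.le_one _)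
  exact (integral_mono_of_nonneg (ae_of_all _ fun _ => norm_nonneg _) (hf.sub hgi).norm
    (ae_of_all _ hpt)).trans hfg

theorem exists_continuous_abs_sub_le_add {ψ : ℝ → ℝ} {T C ε δ l s : ℝ} (hψ : Measurable ψ)
    (hC : ∀ t ∈ Icc 0 l, |ψ t| ≤ C) (hε : 0 ≤ ε) (hl : ∀ t ∈ Ioc l T, |ψ t - ψ T| ≤ ε)
    (hls : l < s) (hδ : 0 < δ) :
    ∃ h F : ℝ → ℝ, Continuous h ∧ Integrable F ∧ 0 ≤ F ∧ (∀ t, s < t → F t = 0) ∧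
      ∫ t, F t ≤ δ ∧ ∀ t ∈ Icc 0 T, |ψ t - h t| ≤ F t + ε := by
  set f := (Icc 0 l).indicator fun t => ψ t - ψ T
  have hf : Integrable f := by
    refine (integrable_indicator_iff measurableSet_Icc).2
      (Measure.integrableOn_of_bounded (by simp) (hψ.sub_const _).aestronglyMeasurable
        (M := C + |ψ T|) ?_)
    filter_upwards [ae_restrict_mem measurableSet_Icc] with t ht
    rw [Real.norm_eq_abs]
    linarith [abs_sub (ψ t) (ψ T), hC t ht]
  have hfl : ∀ t, l < t → f t = 0 := fun t ht =>
    indicator_of_notMem (fun h => (h.2.trans_lt ht).false) _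
  obtain ⟨g, hg, hgc, hgs, hfg⟩ := hf.exists_continuous_eq_zero_integral_norm_sub_le hfl hls hδ
  refine ⟨fun t => ψ T + g t, fun t => |f t - g t|, by fun_prop,
    (hf.sub (hg.integrable_of_hasCompactSupport hgc)).abs, fun _ => abs_nonneg _,
    fun t ht => by simp [hfl t (hls.trans ht), hgs t ht.le], hfg, fun t ht => ?_⟩
  change |ψ t - (ψ T + g t)| ≤ |f t - g t| + ε
  rw [show ψ t - (ψ T + g t) = ψ t - ψ T - g t by ring]
  rcases le_or_gt t l with htl | hlt
  · rw [show f t = ψ t - ψ T from indicator_of_mem (show t ∈ Icc 0 l from ⟨ht.1, htl⟩) _]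
    linarith
  · rw [hfl t hlt, zero_sub, abs_neg]
    linarith [abs_sub (ψ t - ψ T) (g t), hl t ⟨hlt, ht.2⟩]

theorem exists_continuous_abs_setIntegral_sub_le {T C M ε : ℝ} {ψ : ℝ → ℝ}
    (hψ : Measurable ψ) (hC : ∀ t ∈ Icc 0 T, |ψ t| ≤ C)
    (hψT : Tendsto ψ (𝓝[<] T) (𝓝 (ψ T))) (hM : 0 ≤ M) (hε : 0 < ε) :
    ∃ h : ℝ → ℝ, Continuous h ∧ ∀ μ : Measure ℝ, μ (Icc 0 T) ≤ ENNReal.ofReal M →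
      (∀ s < T, μ.restrict (Iic s) ≤ ENNReal.ofReal (M / (T - s)) • volume) →
      |∫ t in Icc 0 T, ψ t ∂μ - ∫ t in Icc 0 T, h t ∂μ| ≤ ε := by
  set ε₁ := ε / (2 * M + 1)
  have hε₁ : 0 < ε₁ := by positivity
  obtain ⟨l, hlT, hl⟩ := exists_lt_forall_Ioc_abs_sub_le hψT hε₁
  set s := (l + T) / 2
  have hls : l < s := by simp only [s]; linarith
  have hsT : 0 < T - s := by simp only [s]; linarith
  obtain ⟨h, F, hh, hF, hF0, hFs, hFint, hψh⟩ := exists_continuous_abs_sub_le_add hψ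
    (fun t ht => hC t ⟨ht.1, ht.2.trans hlT.le⟩) hε₁.le hl hls (mul_pos hε₁ hsT)
  refine ⟨h, hh, fun μ hμM hdom => ?_⟩
  have hμ : μ (Icc 0 T) ≠ ⊤ := ne_top_of_le_ne_top ENNReal.ofReal_ne_top hμM
  have hψμ : IntegrableOn ψ (Icc 0 T) μ := by
    refine Measure.integrableOn_of_bounded hμ hψ.aestronglyMeasurable (M := C) ?_
    filter_upwards [ae_restrict_mem measurableSet_Icc] with t ht using hC t ht
  have hhμ : IntegrableOn h (Icc 0 T) μ := by
    obtain ⟨B, hB⟩ := (isCompact_Icc (a := (0 : ℝ)) (b := T)).exists_bound_of_continuousOn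
      hh.continuousOn
    refine Measure.integrableOn_of_bounded hμ hh.aestronglyMeasurable (M := B) ?_
    filter_upwards [ae_restrict_mem measurableSet_Icc] with t ht using hB t ht
  calc |∫ t in Icc 0 T, ψ t ∂μ - ∫ t in Icc 0 T, h t ∂μ|
      ≤ M / (T - s) * (∫ t, F t) + M * ε₁ :=
        abs_setIntegral_sub_le_of_restrict_le_smul measurableSet_Icc hM hμM
          (div_nonneg hM hsT.le) (hdom s (sub_pos.1 hsT)) hψμ hhμ hF hF0
          (fun t ht => hFs t (not_le.1 ht)) hε₁.le hψh
    _ ≤ M / (T - s) * (ε₁ * (T - s)) + M * ε₁ := by gcongr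
    _ = 2 * M * ε / (2 * M + 1) := by
        simp only [ε₁]
        field_simp
        ring
    _ ≤ ε := by
        rw [div_le_iff₀ (by positivity)]
        nlinarith

theorem statement15_general (T : ℝ)
    (mβ : ℝ → ℝ → ℝ) (m : ℝ → ℝ) (cβ : ℝ → ℝ) (c : ℝ)
    (hmβmono : ∀ β, MonotoneOn (mβ β) (Set.Ico 0 T))
    (hmmono : MonotoneOn m (Set.Ico 0 T))
    (νβ : ℝ → Measure ℝ) (ν : Measure ℝ)
    (hνβ : ∀ β, νβ β =
      (volume.restrict (Set.Ico 0 T)).withDensity (fun t => ENNReal.ofReal (mβ β t)) +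
        ENNReal.ofReal (cβ β) • Measure.dirac T)
    (hν : ν =
      (volume.restrict (Set.Ico 0 T)).withDensity (fun t => ENNReal.ofReal (m t)) +
        ENNReal.ofReal c • Measure.dirac T)
    (hfinβ : ∀ β, IsFiniteMeasure (νβ β)) (hfin : IsFiniteMeasure ν)
    (hconv : ∀ f : ℝ → ℝ, ContinuousOn f (Set.Icc 0 T) →
      Tendsto (fun β => ∫ t in Set.Icc 0 T, f t ∂(νβ β)) atTop
        (nhds (∫ t in Set.Icc 0 T, f t ∂ν)))
    (ψ : ℝ → ℝ) (hψmeas : Measurable ψ)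
    (hψbdd : ∃ C, ∀ t ∈ Set.Icc 0 T, |ψ t| ≤ C)
    (hψlim : Tendsto ψ (nhdsWithin T (Set.Iio T)) (nhds (ψ T))) :
    Tendsto (fun β => ∫ t in Set.Icc 0 T, ψ t ∂(νβ β)) atTop
      (nhds (∫ t in Set.Icc 0 T, ψ t ∂ν)) := by
  obtain ⟨C, hC⟩ := hψbdd
  set M := ν.real (Icc 0 T) + 1
  have hM : 0 ≤ M := by positivity
  have hmass : ∀ (μ : Measure ℝ) [IsFiniteMeasure μ], μ.real (Icc 0 T) ≤ M →
      μ (Icc 0 T) ≤ ENNReal.ofReal M := fun μ _ h =>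
    (ENNReal.le_ofReal_iff_toReal_le (measure_ne_top _ _) hM).2 h
  have hνβM : ∀ᶠ β in atTop, (νβ β).real (Icc 0 T) ≤ M := by
    have := hconv (fun _ => 1) continuousOn_const
    simp only [setIntegral_const, smul_eq_mul, mul_one] at this
    exact this.eventually (eventually_le_nhds (lt_add_one _))
  refine tendsto_of_forall_approx fun ε hε => ?_
  obtain ⟨h, hh, hψh⟩ := exists_continuous_abs_setIntegral_sub_le hψmeas hC hψlim hM hε
  refine ⟨_, _, hconv h hh.continuousOn, hνβM.mono fun β hβ => ?_, ?_⟩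
  · have hβM := @hmass _ (hfinβ β) hβ
    exact hψh _ hβM fun s hs =>
      restrict_Iic_le_smul_volume_of_monotoneOn (hνβ β) (hmβmono β) hβM hs
  · have hνM := hmass ν (lt_add_one _).le
    exact hψh _ hνM fun s hs => restrict_Iic_le_smul_volume_of_monotoneOn hν hmmono hνM hs

/-- Let `T > 0` and let `ν_β = m_β dt + c_β δ_T`, `ν = m dt + c δ_T` be
finite Borel measures on `[0,T]`, with `m_β, m : [0,T) → [0,∞)` nondecreasing and
right-continuous with finite integral and `c_β, c ≥ 0`.  If `ν_β → ν` weak-* as `β → ∞`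
(i.e. `∫ f dν_β → ∫ f dν` for every continuous `f : [0,T] → ℝ`), then for every bounded
Borel `ψ : [0,T] → ℝ` with `lim_{s↑T} ψ(s) = ψ(T)` one has `∫ ψ dν_β → ∫ ψ dν`. -/
theorem statement15 (T : ℝ) (hT : 0 < T)
    (mβ : ℝ → ℝ → ℝ) (m : ℝ → ℝ) (cβ : ℝ → ℝ) (c : ℝ)
    (hmβ0 : ∀ β, ∀ t ∈ Set.Ico 0 T, 0 ≤ mβ β t)
    (hmβmono : ∀ β, MonotoneOn (mβ β) (Set.Ico 0 T))
    (hmβrc : ∀ β, ∀ t ∈ Set.Ico 0 T, ContinuousWithinAt (mβ β) (Set.Ici t) t)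
    (hm0 : ∀ t ∈ Set.Ico 0 T, 0 ≤ m t)
    (hmmono : MonotoneOn m (Set.Ico 0 T))
    (hmrc : ∀ t ∈ Set.Ico 0 T, ContinuousWithinAt m (Set.Ici t) t)
    (hcβ : ∀ β, 0 ≤ cβ β) (hc : 0 ≤ c)
    (νβ : ℝ → Measure ℝ) (ν : Measure ℝ)
    (hνβ : ∀ β, νβ β =
      (volume.restrict (Set.Ico 0 T)).withDensity (fun t => ENNReal.ofReal (mβ β t)) +
        ENNReal.ofReal (cβ β) • Measure.dirac T)
    (hν : ν =
      (volume.restrict (Set.Ico 0 T)).withDensity (fun t => ENNReal.ofReal (m t)) +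
        ENNReal.ofReal c • Measure.dirac T)
    (hfinβ : ∀ β, IsFiniteMeasure (νβ β)) (hfin : IsFiniteMeasure ν)
    (hconv : ∀ f : ℝ → ℝ, ContinuousOn f (Set.Icc 0 T) →
      Tendsto (fun β => ∫ t in Set.Icc 0 T, f t ∂(νβ β)) atTop
        (nhds (∫ t in Set.Icc 0 T, f t ∂ν)))
    (ψ : ℝ → ℝ) (hψmeas : Measurable ψ)
    (hψbdd : ∃ C, ∀ t ∈ Set.Icc 0 T, |ψ t| ≤ C)
    (hψlim : Tendsto ψ (nhdsWithin T (Set.Iio T)) (nhds (ψ T))) :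
    Tendsto (fun β => ∫ t in Set.Icc 0 T, ψ t ∂(νβ β)) atTop
      (nhds (∫ t in Set.Icc 0 T, ψ t ∂ν)) :=
  statement15_general T mβ m cβ c hmβmono hmmono νβ ν hνβ hν hfinβ hfin hconv ψ hψmeas hψbdd hψlim
end

section
/- Let T > 0, let m : [0,T) → [0,∞) be nondecreasing and right-continuous with ∫_0^T m(t) dt < ∞, and let c ≥ 0. For β > 0 set c_β = c if c > 0 and c_β = 1/β if c = 0. Then for all β sufficiently large there exists q_β ∈ (0,T) such that ∫_{q_β}^T m(t) dt + c_β = β(T − q_β) and m(q_β) ≤ β; moreover, any such choice of q_β satisfies q_β → T as β → ∞. -/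
open MeasureTheory Filter Set

/-!
The map `q ↦ ∫_q^T m + β q` is continuous on `[0,T]`, so the intermediate value theorem
produces `q_β` as soon as `βT` exceeds `∫_0^T |m| + c_β`; monotonicity then gives
`m(q_β)(T - q_β) ≤ ∫_{q_β}^T m ≤ β(T - q_β)`. Conversely, `β(T - q_β) = ∫_{q_β}^T m + c_β`
stays bounded as `β → ∞`, which forces `q_β → T`.
-/

theorem continuousOn_setIntegral_Ico_left {E : Type*} [NormedAddCommGroup E] [NormedSpace ℝ E]
    {f : ℝ → E} {a b : ℝ} (hab : a ≤ b) (hf : IntegrableOn f (Ico a b)) :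
    ContinuousOn (fun q => ∫ t in Ico q b, f t) (Icc a b) := by
  have hf' : IntegrableOn f (uIcc a b) := by
    rwa [uIcc_of_le hab, integrableOn_Icc_iff_integrableOn_Ico]
  have h := intervalIntegral.continuousOn_primitive_interval_left hf'
  rw [uIcc_of_le hab] at h
  refine h.congr fun q hq => ?_
  dsimp only
  rw [intervalIntegral.integral_of_le hq.2, integral_Ioc_eq_integral_Ioo,
    integral_Ico_eq_integral_Ioo]

theorem mul_sub_le_setIntegral_Ico_of_monotoneOn {f : ℝ → ℝ} {a b : ℝ} (hab : a < b)
    (hf : MonotoneOn f (Ico a b)) (hfi : IntegrableOn f (Ico a b)) :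
    f a * (b - a) ≤ ∫ t in Ico a b, f t := by
  have h := setIntegral_ge_of_const_le_real measurableSet_Ico (by simp)
    (fun t ht => hf (left_mem_Ico.2 hab) ht ht.1) hfi
  rwa [Real.volume_real_Ico_of_le hab.le] at h

theorem setIntegral_Ico_le_integral_norm {f : ℝ → ℝ} {a b q : ℝ} (haq : a ≤ q)
    (hf : IntegrableOn f (Ico a b)) :
    ∫ t in Ico q b, f t ≤ ∫ t in Ico a b, ‖f t‖ :=
  calc ∫ t in Ico q b, f t ≤ ∫ t in Ico q b, ‖f t‖ :=
        (Real.le_norm_self _).trans (norm_integral_le_integral_norm _)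
    _ ≤ ∫ t in Ico a b, ‖f t‖ :=
        setIntegral_mono_set hf.norm (ae_of_all _ fun _ => norm_nonneg _)
          (Ico_subset_Ico_left haq).eventuallyLE

theorem exists_mem_Ioo_setIntegral_Ico_add_eq_mul {f : ℝ → ℝ} {a b β κ : ℝ} (hab : a ≤ b)
    (hf : IntegrableOn f (Ico a b)) (hκ : 0 < κ)
    (h : (∫ t in Ico a b, f t) + κ < β * (b - a)) :
    ∃ q ∈ Ioo a b, (∫ t in Ico q b, f t) + κ = β * (b - q) := by
  have hcont : ContinuousOn (fun q => (∫ t in Ico q b, f t) + β * q) (Icc a b) :=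
    (continuousOn_setIntegral_Ico_left hab hf).add (continuousOn_const.mul continuousOn_id)
  have hmem : β * b - κ ∈ Ioo ((∫ t in Ico a b, f t) + β * a) ((∫ t in Ico b b, f t) + β * b) := by
    rw [Ico_self, Measure.restrict_empty, integral_zero_measure]
    constructor <;> linarith
  obtain ⟨q, hq, hq_eq⟩ := intermediate_value_Ioo hab hcont hmem
  exact ⟨q, hq, by linarith [hq_eq]⟩

theorem tendsto_of_le_of_mul_sub_le {q : ℝ → ℝ} {T K : ℝ}
    (h : ∀ᶠ x in atTop, q x ≤ T ∧ x * (T - q x) ≤ K) : Tendsto q atTop (nhds T) := by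
  have hlow : Tendsto (fun x => T - K / x) atTop (nhds T) := by
    simpa using (tendsto_const_nhds (x := T)).sub
      ((tendsto_const_nhds (x := K)).div_atTop tendsto_id)
  refine tendsto_of_tendsto_of_tendsto_of_le_of_le' hlow tendsto_const_nhds ?_
    (h.mono fun _ hx => hx.1)
  filter_upwards [h, eventually_gt_atTop 0] with x hx hx0
  rw [sub_le_comm, le_div_iff₀ hx0]
  linarith [hx.2]

theorem ite_pos_one_div_pos (c : ℝ) {β : ℝ} (hβ : 0 < β) : 0 < if 0 < c then c else 1 / β := by
  split_ifs with hc
  exacts [hc, one_div_pos.2 hβ]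

theorem ite_pos_one_div_le_max (c : ℝ) {β : ℝ} (hβ : 1 ≤ β) :
    (if 0 < c then c else 1 / β) ≤ max c 1 := by
  split_ifs
  exacts [le_max_left _ _, ((div_le_one (by linarith)).2 hβ).trans (le_max_right _ _)]

theorem statement16_general (T : ℝ) (hT : 0 < T) (m : ℝ → ℝ)
    (hmmono : MonotoneOn m (Set.Ico 0 T))
    (hmint : IntegrableOn m (Set.Ico 0 T))
    (c : ℝ) :
    (∃ β₀ : ℝ, ∀ β ≥ β₀, ∃ q ∈ Set.Ioo 0 T,
        (∫ t in Set.Ico q T, m t) + (if 0 < c then c else 1 / β) = β * (T - q) ∧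
        m q ≤ β) ∧
    (∀ qf : ℝ → ℝ,
      (∀ᶠ β in atTop, qf β ∈ Set.Ioo 0 T ∧
        (∫ t in Set.Ico (qf β) T, m t) + (if 0 < c then c else 1 / β) = β * (T - qf β) ∧
        m (qf β) ≤ β) →
      Tendsto qf atTop (nhds T)) := by
  set K := (∫ t in Ico 0 T, ‖m t‖) + max c 1
  have hbound (q : ℝ) (hq : 0 ≤ q) : ∫ t in Ico q T, m t ≤ ∫ t in Ico 0 T, ‖m t‖ :=
    setIntegral_Ico_le_integral_norm hq hmint
  constructor
  · refine ⟨max 1 ((K + 1) / T), fun β hβ => ?_⟩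
    have hβ1 : 1 ≤ β := le_of_max_le_left hβ
    have hβT : K + 1 ≤ β * T := (div_le_iff₀ hT).1 (le_of_max_le_right hβ)
    have hcβ := ite_pos_one_div_pos c (zero_lt_one.trans_le hβ1)
    obtain ⟨q, hq, hq_eq⟩ := exists_mem_Ioo_setIntegral_Ico_add_eq_mul (β := β) hT.le hmint hcβ
      (by linarith [hbound 0 le_rfl, ite_pos_one_div_le_max c hβ1])
    refine ⟨q, hq, hq_eq, le_of_mul_le_mul_right ?_ (sub_pos.2 hq.2)⟩
    linarith [mul_sub_le_setIntegral_Ico_of_monotoneOn hq.2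
      (hmmono.mono (Ico_subset_Ico_left hq.1.le)) (hmint.mono_set (Ico_subset_Ico_left hq.1.le))]
  · intro qf hqf
    refine tendsto_of_le_of_mul_sub_le (K := K) ?_
    filter_upwards [hqf, eventually_ge_atTop 1] with β ⟨hq, hq_eq, _⟩ hβ1
    exact ⟨hq.2.le, by linarith [hbound _ hq.1.le, ite_pos_one_div_le_max c hβ1]⟩

/-- Let `T > 0`, `m : [0,T) → [0,∞)` nondecreasing and right-continuous
with `∫₀ᵀ m < ∞`, and `c ≥ 0`.  With `c_β = c` if `c > 0` and `c_β = 1/β` otherwise, for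
all sufficiently large `β` there exists `q_β ∈ (0,T)` with
`∫_{q_β}^T m(t) dt + c_β = β(T − q_β)` and `m(q_β) ≤ β`; moreover any such choice of `q_β`
satisfies `q_β → T` as `β → ∞`. -/
theorem statement16 (T : ℝ) (hT : 0 < T) (m : ℝ → ℝ)
    (hm0 : ∀ t ∈ Set.Ico 0 T, 0 ≤ m t)
    (hmmono : MonotoneOn m (Set.Ico 0 T))
    (hmrc : ∀ t ∈ Set.Ico 0 T, ContinuousWithinAt m (Set.Ici t) t)
    (hmint : IntegrableOn m (Set.Ico 0 T))
    (c : ℝ) (hc : 0 ≤ c) :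
    (∃ β₀ : ℝ, ∀ β ≥ β₀, ∃ q ∈ Set.Ioo 0 T,
        (∫ t in Set.Ico q T, m t) + (if 0 < c then c else 1 / β) = β * (T - q) ∧
        m q ≤ β) ∧
    (∀ qf : ℝ → ℝ,
      (∀ᶠ β in atTop, qf β ∈ Set.Ioo 0 T ∧
        (∫ t in Set.Ico (qf β) T, m t) + (if 0 < c then c else 1 / β) = β * (T - qf β) ∧
        m (qf β) ≤ β) →
      Tendsto qf atTop (nhds T)) :=
  statement16_general T hT m hmmono hmint c
end
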